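/- For every binary tree t, it holds that rk(t) + log₂(|t|) ≥ 2·|t| − 1. (Equivalently: rk(t) + log₂(|t|) + 1 ≥ c(t) + rk(leaf) + 1, where c(t) = 2·(|t| − 1) is the total number of ticks incurred by the function foo on input t, which performs two recursive calls of cost 1 each at every internal node and nondeterministically returns one of the results; this is the inequality expressed by the annotated type derived for foo.) -/
import Mathlib

/-- Binary trees with data elements of type `α` at internal nodes. -/
inductive BTree (α : Type) : Type
  | leaf : BTree α
  | node : BTree α → α → BTree α → BTree α

/-- The size of a tree is its number of leaves. -/
def BTree.size {α : Type} : BTree α → ℕ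
  | .leaf => 1
  | .node l _ r => l.size + r.size

/-- Schoenmakers' potential (rank): `rk(leaf) = 1`,
`rk(node l d r) = rk l + log₂ |l| + log₂ |r| + rk r`. -/
noncomputable def BTree.rk {α : Type} : BTree α → ℝ
  | .leaf => 1
  | .node l _ r => l.rk + Real.logb 2 (l.size : ℝ) + Real.logb 2 (r.size : ℝ) + r.rk

lemma BTree.size_pos {α : Type} (t : BTree α) : 1 ≤ t.size := by
  induction t with
  | leaf => simp [BTree.size]
  | node l d r ihl ihr => simp [BTree.size]; omega

/-- For every binary tree `t`, `rk t + log₂ |t| ≥ 2·|t| − 1`. -/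
theorem rk_add_log_ge {α : Type} (t : BTree α) :
    2 * (t.size : ℝ) - 1 ≤ t.rk + Real.logb 2 (t.size : ℝ) := by
  induction t with
  | leaf => norm_num [BTree.size, BTree.rk]
  | node l d r ihl ihr =>
    have hl := l.size_pos
    have hr := r.size_pos
    have h2 : (2:ℝ) ≤ ((l.size + r.size : ℕ) : ℝ) := by
      push_cast; have : 2 ≤ l.size + r.size := by omega
      exact_mod_cast this
    have hlog : (1:ℝ) ≤ Real.logb 2 ((l.size + r.size : ℕ) : ℝ) := by
      calc (1:ℝ) = Real.logb 2 2 := by simp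
        _ ≤ _ := Real.logb_le_logb_of_le (by norm_num) (by norm_num) h2
    simp only [BTree.size, BTree.rk]
    push_cast at hlog ⊢
    linarith
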